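/- arXiv:math/0603234 — 4 statements merged into one kernel-verified Lean document; each statement's English description precedes it below -/
import Mathlib

section
/- Let (R,m) be a local ring of positive dimension. The punctured spectrum Spec R \ {m} is disconnected if and only if the minimal primes of R can be partitioned into two nonempty sets p_1,…,p_m and q_1,…,q_n such that rad(p_i + q_j) = m for all pairs (i,j). -/
/-!
The punctured spectrum `X` is covered by the finitely many closed sets `V(p) ∩ X`, `p` minimal,
each the closure of the point `p` and hence connected. A space covered by finitely many closed
connected sets is disconnected exactly when these sets split into two nonempty groups with every
member of one group disjoint from every member of the other. Finally `V(p) ∩ V(q)` misses `X`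
exactly when every prime containing `p + q` is `m`, i.e. when `rad (p + q) = m`.
-/

open Set IsLocalRing

theorem not_preconnectedSpace_iff_exists_partition {X ι : Type*} [TopologicalSpace X]
    {s : Set ι} (hs : s.Finite) (Z : ι → Set X) (hcover : ⋃ i ∈ s, Z i = univ)
    (hclosed : ∀ i ∈ s, IsClosed (Z i)) (hconn : ∀ i ∈ s, IsConnected (Z i)) :
    ¬ PreconnectedSpace X ↔ ∃ S T : Set ι, S.Nonempty ∧ T.Nonempty ∧ Disjoint S T ∧
      S ∪ T = s ∧ ∀ i ∈ S, ∀ j ∈ T, Disjoint (Z i) (Z j) := by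
  have hmem (x : X) : ∃ i ∈ s, x ∈ Z i := by simpa using hcover.ge (mem_univ x)
  constructor
  · intro hX
    obtain ⟨U, hU, hUne⟩ : ∃ U : Set X, IsClopen U ∧ ¬(U = ∅ ∨ U = univ) := by
      simpa [preconnectedSpace_iff_clopen] using hX
    push Not at hUne
    have hside : ∀ i ∈ s, Z i ⊆ U ∨ Z i ⊆ Uᶜ := fun i hi =>
      (hconn i hi).isPreconnected.subset_or_subset hU.isOpen hU.compl.isOpen disjoint_compl_right
        (by simp)
    refine ⟨{i ∈ s | Z i ⊆ U}, {i ∈ s | Z i ⊆ Uᶜ}, ?_, ?_, ?_, ?_, ?_⟩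
    · obtain ⟨x, hx⟩ := hUne.1
      obtain ⟨i, hi, hxi⟩ := hmem x
      exact ⟨i, hi, (hside i hi).resolve_right fun h => h hxi hx⟩
    · obtain ⟨x, hx⟩ := (ne_univ_iff_exists_notMem U).mp hUne.2
      obtain ⟨i, hi, hxi⟩ := hmem x
      exact ⟨i, hi, (hside i hi).resolve_left fun h => hx (h hxi)⟩
    · refine disjoint_left.mpr fun i ⟨hi, hiU⟩ ⟨_, hiU'⟩ => ?_
      obtain ⟨x, hx⟩ := (hconn i hi).nonempty
      exact hiU' hx (hiU hx)
    · ext i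
      simp only [mem_union, mem_ofPred_eq, ← and_or_left, and_iff_left_iff_imp]
      exact hside i
    · exact fun i ⟨_, hiU⟩ j ⟨_, hjU⟩ => disjoint_compl_right.mono hiU hjU
  · rintro ⟨S, T, ⟨i, hi⟩, ⟨j, hj⟩, -, rfl, hZ⟩ hX
    have hU : IsClosed (⋃ i ∈ S, Z i) :=
      (hs.subset subset_union_left).isClosed_biUnion fun i hi => hclosed i (Or.inl hi)
    have hV : IsClosed (⋃ j ∈ T, Z j) :=
      (hs.subset subset_union_right).isClosed_biUnion fun j hj => hclosed j (Or.inr hj)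
    have hUV : IsCompl (⋃ i ∈ S, Z i) (⋃ j ∈ T, Z j) := by
      refine ⟨?_, codisjoint_iff.mpr ((biUnion_union S T Z).symm.trans hcover)⟩
      simp only [disjoint_iUnion_left, disjoint_iUnion_right]
      exact fun j hj i hi => hZ i hi j hj
    have hUopen : IsOpen (⋃ i ∈ S, Z i) := hUV.symm.compl_eq ▸ hV.isOpen_compl
    obtain ⟨x, hx⟩ := (hconn i (Or.inl hi)).nonempty
    obtain ⟨y, hy⟩ := (hconn j (Or.inr hj)).nonempty
    rcases isClopen_iff.mp ⟨hU, hUopen⟩ with h | h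
    · exact eq_empty_iff_forall_notMem.mp h x (mem_biUnion hi hx)
    · exact hUV.disjoint.notMem_of_mem_left (h ▸ mem_univ y) (mem_biUnion hj hy)

lemma IsLocalRing.ne_maximalIdeal_iff_not_le {R : Type*} [CommRing R] [IsLocalRing R]
    {J : Ideal R} (hJ : J.IsPrime) : J ≠ maximalIdeal R ↔ ¬ maximalIdeal R ≤ J :=
  not_congr ⟨fun h => h ▸ le_rfl, fun h => le_antisymm (le_maximalIdeal hJ.ne_top) h⟩

section

variable (R : Type*) [CommRing R] [IsLocalRing R]

abbrev PuncturedSpectrum : Type _ := {x : PrimeSpectrum R // x.asIdeal ≠ maximalIdeal R}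

namespace PuncturedSpectrum

variable {R}

theorem nonempty_iff : Nonempty (PuncturedSpectrum R) ↔ 0 < ringKrullDim R := by
  rw [ringKrullDim, Order.krullDim_pos_iff]
  constructor
  · rintro ⟨x, hx⟩
    exact ⟨x, closedPoint R, show x.asIdeal < maximalIdeal R from
      (le_maximalIdeal x.2.ne_top).lt_of_ne hx⟩
  · rintro ⟨x, y, hxy⟩
    exact ⟨x, (show x.asIdeal < y.asIdeal from hxy).trans_le (le_maximalIdeal y.2.ne_top) |>.ne⟩

lemma ne_maximalIdeal_of_mem_minimalPrimes [Nonempty (PuncturedSpectrum R)] {p : Ideal R}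
    (hp : p ∈ minimalPrimes R) : p ≠ maximalIdeal R := by
  rintro rfl
  obtain ⟨x, hx⟩ := ‹Nonempty (PuncturedSpectrum R)›
  have hle := le_maximalIdeal x.2.ne_top
  exact hx (le_antisymm hle (hp.2 ⟨x.2, bot_le⟩ hle))

def zeroLocus (I : Ideal R) : Set (PuncturedSpectrum R) :=
  Subtype.val ⁻¹' PrimeSpectrum.zeroLocus I

lemma mem_zeroLocus {I : Ideal R} {x : PuncturedSpectrum R} :
    x ∈ zeroLocus I ↔ I ≤ x.1.asIdeal :=
  PrimeSpectrum.mem_zeroLocus _ _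

lemma isClosed_zeroLocus (I : Ideal R) : IsClosed (zeroLocus I) :=
  (PrimeSpectrum.isClosed_zeroLocus _).preimage continuous_subtype_val

lemma zeroLocus_asIdeal (x : PuncturedSpectrum R) : zeroLocus x.1.asIdeal = closure {x} := by
  ext y
  rw [closure_subtype, image_singleton, PrimeSpectrum.closure_singleton]
  rfl

lemma isConnected_zeroLocus {p : Ideal R} (hp : p.IsPrime) (hpm : p ≠ maximalIdeal R) :
    IsConnected (zeroLocus p) :=
  zeroLocus_asIdeal (⟨⟨p, hp⟩, hpm⟩ : PuncturedSpectrum R) ▸ isConnected_singleton.closure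

lemma iUnion_minimalPrimes_zeroLocus : ⋃ p ∈ minimalPrimes R, zeroLocus p = univ :=
  eq_univ_of_forall fun x => mem_iUnion₂.mpr <| by
    simpa only [exists_prop, mem_zeroLocus] using
      Ideal.exists_minimalPrimes_le (J := x.1.asIdeal) bot_le

lemma zeroLocus_eq_empty_iff {I : Ideal R} : zeroLocus I = ∅ ↔ maximalIdeal R ≤ I.radical := by
  simp only [Ideal.radical_eq_sInf, le_sInf_iff, eq_empty_iff_forall_notMem, mem_zeroLocus,
    mem_ofPred_eq, and_imp]
  constructor
  · intro h J hIJ hJ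
    by_contra hmJ
    exact h ⟨⟨J, hJ⟩, (ne_maximalIdeal_iff_not_le hJ).mpr hmJ⟩ hIJ
  · intro h x hIx
    exact (ne_maximalIdeal_iff_not_le x.1.2).mp x.2 (h _ hIx x.1.2)

lemma zeroLocus_sup (I J : Ideal R) : zeroLocus (I ⊔ J) = zeroLocus I ∩ zeroLocus J :=
  congrArg (Subtype.val ⁻¹' ·) (PrimeSpectrum.zeroLocus_sup I J)

lemma disjoint_zeroLocus_iff {I J : Ideal R} (h : I ⊔ J ≠ ⊤) :
    Disjoint (zeroLocus I) (zeroLocus J) ↔ (I ⊔ J).radical = maximalIdeal R := by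
  rw [disjoint_iff_inter_eq_empty, ← zeroLocus_sup, zeroLocus_eq_empty_iff]
  refine ⟨fun hm => le_antisymm ?_ hm, fun hm => hm.ge⟩
  exact (maximalIdeal.isMaximal R).isPrime.radical ▸ Ideal.radical_mono (le_maximalIdeal h)

end PuncturedSpectrum

end

open PuncturedSpectrum in
/-- Let `(R, m)` be a Noetherian local ring of positive dimension.  The punctured
spectrum `Spec R \ {m}` is disconnected if and only if the minimal primes of `R`
can be partitioned into two nonempty sets such that `rad (p + q) = m` for every
pair `(p, q)` of primes from the two sets, respectively. -/
theorem stmt_1 (R : Type*) [CommRing R] [IsNoetherianRing R] [IsLocalRing R]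
    (hdim : 0 < ringKrullDim R) :
    ¬ ConnectedSpace {q : PrimeSpectrum R // q.asIdeal ≠ IsLocalRing.maximalIdeal R} ↔
      ∃ S T : Set (Ideal R), S.Nonempty ∧ T.Nonempty ∧ Disjoint S T ∧
        S ∪ T = minimalPrimes R ∧
        ∀ p ∈ S, ∀ q ∈ T, (p ⊔ q).radical = IsLocalRing.maximalIdeal R := by
  have hX := nonempty_iff.mpr hdim
  have hproper {p q : Ideal R} (hp : p ∈ minimalPrimes R) (hq : q ∈ minimalPrimes R) :
      p ⊔ q ≠ ⊤ :=
    ne_top_of_le_ne_top (maximalIdeal.isMaximal R).ne_top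
      (sup_le (le_maximalIdeal hp.1.1.ne_top) (le_maximalIdeal hq.1.1.ne_top))
  rw [show ¬ConnectedSpace (PuncturedSpectrum R) ↔ ¬PreconnectedSpace (PuncturedSpectrum R) from
      not_congr ⟨fun h => h.toPreconnectedSpace, fun _ => ⟨hX⟩⟩,
    not_preconnectedSpace_iff_exists_partition (minimalPrimes.finite_of_isNoetherianRing R)
      zeroLocus iUnion_minimalPrimes_zeroLocus (fun p _ => isClosed_zeroLocus p)
      (fun p hp => isConnected_zeroLocus hp.1.1 (ne_maximalIdeal_of_mem_minimalPrimes hp))]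
  refine exists₂_congr fun S T => and_congr_right' <| and_congr_right' <| and_congr_right' <|
    and_congr_right fun hST => forall₂_congr fun p hp => forall₂_congr fun q hq => ?_
  rw [← hST] at hproper
  exact disjoint_zeroLocus_iff (hproper (Or.inl hp) (Or.inr hq))
end

section
/- Let A be a local domain and P_1,…,P_n pairwise incomparable prime ideals of A with n ≥ 2. Set R = A/(P_1 ∩ ⋯ ∩ P_n). If the punctured spectrum of R is connected, then there exists an index i such that the punctured spectrum of A/(P_1 ∩ ⋯ ∩ \hat{P_i} ∩ ⋯ ∩ P_n) (omitting P_i) is also connected. -/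
/-!
Write `Z j = V(P j) \ {𝔪}`. The punctured spectrum of `A ⧸ ⋂ P j` is `⋃ Z j`, and each `Z j` is
connected because it contains its generic point `P j`, which is not `𝔪` by incomparability. The
`Z j` are closed in their union, so the union is connected exactly when the graph joining `i` and
`j` whenever `Z i` meets `Z j` is connected. A finite connected graph has a vertex whose removal
leaves it connected (a leaf of a spanning tree), and omitting the corresponding `P i` keeps the
punctured spectrum connected.
-/

/-- The punctured spectrum of the quotient `A ⧸ I` of a local ring `(A, M)` is
connected: here the closed point of `Spec (A ⧸ I)` is the image `M.map (mk I)`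
of the maximal ideal of `A`. -/
def PuncturedSpecQuotientConnected {A : Type*} [CommRing A] [IsLocalRing A]
    (I : Ideal A) : Prop :=
  ConnectedSpace {q : PrimeSpectrum (A ⧸ I) //
    q.asIdeal ≠ (IsLocalRing.maximalIdeal A).map (Ideal.Quotient.mk I)}

open PrimeSpectrum IsLocalRing

section Topology

variable {ι X : Type*} [TopologicalSpace X]

def intersectionGraph (s : ι → Set X) : SimpleGraph ι where
  Adj i j := i ≠ j ∧ (s i ∩ s j).Nonempty
  symm := ⟨fun _ _ h => ⟨h.1.symm, Set.inter_comm (s _) _ ▸ h.2⟩⟩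
  loopless := ⟨fun _ h => h.1 rfl⟩

theorem SimpleGraph.Preconnected.isPreconnected_iUnion {G : SimpleGraph ι} (hG : G.Preconnected)
    {s : ι → Set X} (hadj : ∀ i j, G.Adj i j → (s i ∩ s j).Nonempty)
    (hs : ∀ i, IsPreconnected (s i)) : IsPreconnected (⋃ i, s i) :=
  IsPreconnected.iUnion_of_reflTransGen hs fun i j =>
    Relation.ReflTransGen.mono hadj i j ((SimpleGraph.reachable_iff_reflTransGen i j).1 (hG i j))

theorem IsPreconnected.preconnected_intersectionGraph [Finite ι] {s F : ι → Set X}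
    (hs : IsPreconnected (⋃ i, s i)) (hne : ∀ i, (s i).Nonempty) (hF : ∀ i, IsClosed (F i))
    (hsF : ∀ i, s i = (⋃ j, s j) ∩ F i) : (intersectionGraph s).Preconnected := by
  intro i j
  by_contra hij
  -- the vertices reachable from `i`, and the others, split the union into two closed pieces
  set t := {k | (intersectionGraph s).Reachable i k}
  have hclosed (u : Set ι) : IsClosed (⋃ k ∈ u, F k) :=
    u.toFinite.isClosed_biUnion fun k _ => hF k
  have hmemF {k x} (hx : x ∈ s k) : x ∈ F k := (hsF k).trans_subset Set.inter_subset_right hx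
  have hcover : ⋃ k, s k ⊆ (⋃ k ∈ t, F k) ∪ ⋃ k ∈ tᶜ, F k := by
    refine Set.iUnion_subset fun k x hx => ?_
    by_cases hk : k ∈ t
    exacts [Or.inl (Set.mem_biUnion hk (hmemF hx)), Or.inr (Set.mem_biUnion hk (hmemF hx))]
  have hmeet {k} {u : Set ι} (hk : k ∈ u) : ((⋃ k, s k) ∩ ⋃ l ∈ u, F l).Nonempty :=
    let ⟨x, hx⟩ := hne k
    ⟨x, Set.mem_iUnion_of_mem k hx, Set.mem_biUnion hk (hmemF hx)⟩
  obtain ⟨x, hx, hxt, hxt'⟩ := isPreconnected_closed_iff.1 hs _ _ (hclosed t) (hclosed tᶜ) hcover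
    (hmeet (SimpleGraph.Reachable.refl i)) (hmeet hij)
  obtain ⟨k, hk, hxk⟩ := Set.mem_iUnion₂.1 hxt
  obtain ⟨l, hl, hxl⟩ := Set.mem_iUnion₂.1 hxt'
  have hadj : (intersectionGraph s).Adj k l :=
    ⟨fun h => hl (h ▸ hk), x, hsF k ▸ ⟨hx, hxk⟩, hsF l ▸ ⟨hx, hxl⟩⟩
  exact hl (hk.trans hadj.reachable)

end Topology

namespace PrimeSpectrum

variable {R : Type*} [CommRing R]

theorem zeroLocus_biInf {ι : Type*} {s : Set ι} (hs : s.Finite) (I : ι → Ideal R) :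
    zeroLocus ((⨅ i ∈ s, I i : Ideal R) : Set R) = ⋃ i ∈ s, zeroLocus (I i) := by
  induction s, hs using Set.Finite.induction_on with
  | empty => simp
  | insert _ _ ih => rw [iInf_insert, zeroLocus_inf, ih, Set.biUnion_insert]

end PrimeSpectrum

section LocalRing

variable {A : Type*} [CommRing A] [IsLocalRing A]

theorem image_comap_quotient_mk_punctured (I : Ideal A) (hI : I ≤ maximalIdeal A) :
    comap (Ideal.Quotient.mk I) ''
        {q | q.asIdeal ≠ (maximalIdeal A).map (Ideal.Quotient.mk I)} =
      zeroLocus I \ {closedPoint A} := by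
  have hsurj : Function.Surjective (Ideal.Quotient.mk I) := Ideal.Quotient.mk_surjective
  let q₀ : PrimeSpectrum (A ⧸ I) := ⟨(maximalIdeal A).map (Ideal.Quotient.mk I),
    Ideal.map_isPrime_of_surjective hsurj (by rwa [Ideal.mk_ker])⟩
  have hq₀ : comap (Ideal.Quotient.mk I) q₀ = closedPoint A := by
    ext1
    show _ = maximalIdeal A
    simpa [q₀, Ideal.comap_map_of_surjective' _ hsurj] using hI
  have hpunct : {q | q.asIdeal ≠ (maximalIdeal A).map (Ideal.Quotient.mk I)} = {q₀}ᶜ := by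
    ext q
    simp [q₀, PrimeSpectrum.ext_iff]
  rw [hpunct, Set.image_compl_eq_range_sdiff_image (comap_injective_of_surjective _ hsurj),
    range_comap_of_surjective _ _ hsurj, Set.image_singleton, hq₀, Ideal.mk_ker]

theorem puncturedSpecQuotientConnected_iff (I : Ideal A) :
    PuncturedSpecQuotientConnected I ↔ IsConnected (zeroLocus I \ {closedPoint A}) := by
  rcases eq_or_ne I ⊤ with rfl | hI
  · -- `A ⧸ ⊤` is the zero ring, whose spectrum is empty
    simp only [Submodule.top_coe, zeroLocus_univ, Set.empty_sdiff]
    exact iff_of_false (fun h => isEmptyElim h.toNonempty.some.1)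
      fun h => Set.not_nonempty_empty h.nonempty
  refine (isConnected_iff_connectedSpace (s := {q : PrimeSpectrum (A ⧸ I) |
    q.asIdeal ≠ (maximalIdeal A).map (Ideal.Quotient.mk I)})).symm.trans ?_
  rw [← image_comap_quotient_mk_punctured I (le_maximalIdeal hI)]
  have hind := (isClosedEmbedding_comap_of_surjective _ _
    (Ideal.Quotient.mk_surjective (I := I))).isInducing
  exact (and_congr Set.image_nonempty hind.isPreconnected_image).symm

theorem puncturedSpecQuotientConnected_biInf_iff {ι : Type*} {s : Set ι} (hs : s.Finite)
    (P : ι → Ideal A) :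
    PuncturedSpecQuotientConnected (⨅ i ∈ s, P i) ↔
      IsConnected (⋃ i ∈ s, zeroLocus (P i) \ {closedPoint A}) := by
  simp only [puncturedSpecQuotientConnected_iff, zeroLocus_biInf hs, Set.iUnion_sdiff]

theorem isConnected_zeroLocus_sdiff_closedPoint (p : PrimeSpectrum A) (hp : p ≠ closedPoint A) :
    IsConnected (zeroLocus p.asIdeal \ {closedPoint A}) := by
  have hmem : p ∈ zeroLocus p.asIdeal \ {closedPoint A} :=
    ⟨(mem_zeroLocus _ _).2 subset_rfl, hp⟩
  refine ⟨⟨_, hmem⟩,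
    isPreconnected_singleton.subset_closure (Set.singleton_subset_iff.2 hmem) ?_⟩
  rw [PrimeSpectrum.closure_singleton]
  exact Set.sdiff_subset

end LocalRing

theorem stmt_2_general (A : Type*) [CommRing A] [IsLocalRing A]
    (n : ℕ) (hn : 2 ≤ n) (P : Fin n → Ideal A)
    (hprime : ∀ i, (P i).IsPrime)
    (hincomp : ∀ i j, i ≠ j → ¬ P i ≤ P j)
    (hconn : PuncturedSpecQuotientConnected (⨅ i, P i)) :
    ∃ i : Fin n, PuncturedSpecQuotientConnected (⨅ j ∈ ({i}ᶜ : Set (Fin n)), P j) := by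
  have : Nontrivial (Fin n) := Fin.nontrivial_iff_two_le.2 hn
  set Z : Fin n → Set (PrimeSpectrum A) := fun i => zeroLocus (P i) \ {closedPoint A}
  have hZ (i : Fin n) : IsConnected (Z i) := by
    obtain ⟨j, hji⟩ := exists_ne i
    refine isConnected_zeroLocus_sdiff_closedPoint ⟨P i, hprime i⟩ fun h => hincomp j i hji ?_
    rw [show P i = maximalIdeal A from congrArg PrimeSpectrum.asIdeal h]
    exact le_maximalIdeal (hprime j).ne_top
  rw [← iInf_univ, puncturedSpecQuotientConnected_biInf_iff Set.finite_univ, Set.biUnion_univ]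
    at hconn
  have hG : (intersectionGraph Z).Connected := by
    refine ⟨hconn.isPreconnected.preconnected_intersectionGraph (fun i => (hZ i).nonempty)
      (fun i => isClosed_zeroLocus (P i)) fun i => ?_⟩
    ext x
    simp only [Set.mem_inter_iff, Set.mem_iUnion, Set.mem_sdiff]
    grind
  obtain ⟨v, hv⟩ := hG.exists_preconnected_induce_compl_singleton_of_finite
  obtain ⟨w, hw⟩ := exists_ne v
  refine ⟨v, (puncturedSpecQuotientConnected_biInf_iff (Set.toFinite _) P).2 ?_⟩
  rw [Set.biUnion_eq_iUnion]
  exact ⟨Set.nonempty_iUnion.2 ⟨⟨w, hw⟩, (hZ w).nonempty⟩,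
    hv.isPreconnected_iUnion (fun _ _ h => h.2) fun i => (hZ i).isPreconnected⟩

/-- Let `A` be a Noetherian local domain and `P 0, …, P (n-1)` pairwise incomparable
prime ideals of `A`, with `n ≥ 2`.  If the punctured spectrum of
`A ⧸ (P 0 ∩ ⋯ ∩ P (n-1))` is connected, then there is an index `i` such that the
punctured spectrum of the quotient by the intersection of the other `P j`'s
(omitting `P i`) is also connected. -/
theorem stmt_2 (A : Type*) [CommRing A] [IsNoetherianRing A] [IsLocalRing A]
    [IsDomain A] (n : ℕ) (hn : 2 ≤ n) (P : Fin n → Ideal A)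
    (hprime : ∀ i, (P i).IsPrime)
    (hincomp : ∀ i j, i ≠ j → ¬ P i ≤ P j)
    (hconn : PuncturedSpecQuotientConnected (⨅ i, P i)) :
    ∃ i : Fin n, PuncturedSpecQuotientConnected (⨅ j ∈ ({i}ᶜ : Set (Fin n)), P j) :=
  stmt_2_general A n hn P hprime hincomp hconn
end

section
/- Let (R,m) be a Noetherian local ring of positive dimension containing a field of characteristic p > 0 such that H^1_m(R) is F-torsion. Suppose a and b are ideals of R with a ∩ b = 0 and a + b m-primary. Then a or b is m-primary. Consequently, the punctured spectrum of R is connected. -/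
/-!
Write generators of `a + b` as `x i = A i + B i` with `A i ∈ a`, `B i ∈ b`. The cross terms
`A i * B j - A j * B i` lie in `a ∩ b`, hence are nilpotent, so after a Frobenius power `q` the
fractions `A i ^ q / x i ^ q` form a Čech 1-cocycle. Its F-torsion yields `r` and a larger
Frobenius power `Q` with `x i ^ t * ((1 - r) * A i ^ Q - r * B i ^ Q) = 0`; both products are
then in `a ∩ b`, hence nilpotent. As `R` is local, `r` or `1 - r` is a unit, and checking prime
by prime shows that all `B i`, resp. all `A i`, are nilpotent; then `a`, resp. `b`, has the same
radical as `a + b`.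

A clopen decomposition of the punctured spectrum is cut out by ideals `I`, `J` with `I ∩ J`
nilpotent and `I + J` `m`-primary; if both pieces are nonempty, neither ideal is `m`-primary.
-/

open IsLocalRing Ideal Set

section CommRing

variable {R : Type*} [CommRing R]

theorem IsNoetherianRing.exists_forall_pow_eq_zero_of_isNilpotent [IsNoetherianRing R] :
    ∃ n : ℕ, ∀ x : R, IsNilpotent x → x ^ n = 0 := by
  obtain ⟨n, hn⟩ := IsNoetherianRing.isNilpotent_nilradical R
  refine ⟨n, fun x hx => ?_⟩
  simpa [hn] using Ideal.pow_mem_pow (mem_nilradical.mpr hx) n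

theorem Ideal.radical_span_range_pow {ι : Type*} (x : ι → R) {n : ℕ} (hn : n ≠ 0) :
    (span (range fun i => x i ^ n)).radical = (span (range x)).radical := by
  apply le_antisymm <;> rw [radical_le_radical_iff, span_le] <;> rintro _ ⟨i, rfl⟩
  · exact le_radical (pow_mem_of_mem _ (subset_span (mem_range_self i)) _ (Nat.pos_of_ne_zero hn))
  · exact ⟨n, subset_span ⟨i, rfl⟩⟩

theorem isNilpotent_of_isNilpotent_add_pow_mul {a b u : R} {n m : ℕ} (hab : IsNilpotent (a * b))
    (hu : IsUnit u) (h : IsNilpotent ((a + b) ^ n * (u * a ^ m))) :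
    IsNilpotent a := by
  rw [nilpotent_iff_mem_prime] at hab h ⊢
  intro P hP
  have hu : u ∉ P := fun h => hP.ne_top (P.eq_top_of_isUnit_mem h hu)
  rcases hP.mem_or_mem (hab P hP) with ha | hb
  · exact ha
  rcases hP.mem_or_mem (h P hP) with hsum | hua
  · simpa using P.sub_mem (hP.mem_of_pow_mem n hsum) hb
  · exact hP.mem_of_pow_mem m ((hP.mem_or_mem hua).resolve_left hu)

theorem add_mem_radical_of_isNilpotent_add_pow_mul {a b u : R} {n m : ℕ} {I : Ideal R}
    (hb : b ∈ I) (hab : IsNilpotent (a * b)) (hu : IsUnit u)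
    (h : IsNilpotent ((a + b) ^ n * (u * a ^ m))) : a + b ∈ I.radical :=
  add_mem (radical_mono bot_le <| mem_nilradical.mpr <|
    isNilpotent_of_isNilpotent_add_pow_mul hab hu h) (le_radical hb)

end CommRing

/-- Čech form of "`H¹_m(R)` is F-torsion": if `x` generates an `m`-primary ideal and `(y i / x i)`
is a Čech 1-cocycle, then some Frobenius power `(y i / x i) ^ p ^ e` is the image of one `r ∈ R`
in every `R_{x i}`. -/
def IsFTorsionLocalCohomologyOne (R : Type*) [CommRing R] [IsLocalRing R] (p : ℕ) : Prop :=
  ∀ (d : ℕ) (x y : Fin d → R),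
    (span (range x)).radical = maximalIdeal R →
    (∀ i j, ∃ t : ℕ, (x i * x j) ^ t * (y i * x j - y j * x i) = 0) →
    ∃ (e : ℕ) (r : R), ∀ i, ∃ t : ℕ, x i ^ t * (y i ^ p ^ e - r * x i ^ p ^ e) = 0

namespace IsFTorsionLocalCohomologyOne

variable {R : Type*} [CommRing R] [IsNoetherianRing R] [IsLocalRing R] {p : ℕ} [Fact p.Prime]
  [CharP R p]

theorem exists_nilpotent_relation (hF : IsFTorsionLocalCohomologyOne R p) {a b : Ideal R}
    (hab : a ⊓ b ≤ nilradical R) {d : ℕ} {A B : Fin d → R} (hA : ∀ i, A i ∈ a) (hB : ∀ i, B i ∈ b)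
    (hm : (span (range fun i => A i + B i)).radical = maximalIdeal R) :
    ∃ r : R, ∀ i, ∃ n m : ℕ, IsNilpotent ((A i + B i) ^ n * ((1 - r) * A i ^ m)) ∧
      IsNilpotent ((A i + B i) ^ n * (r * B i ^ m)) := by
  have hp : p.Prime := Fact.out
  obtain ⟨k, hk⟩ := IsNoetherianRing.exists_forall_pow_eq_zero_of_isNilpotent (R := R)
  replace hk (x : R) (hx : IsNilpotent x) : x ^ p ^ k = 0 :=
    pow_eq_zero_of_le (Nat.lt_pow_self hp.one_lt).le (hk x hx)
  -- Raising to `p ^ k` kills the nilpotent cross terms, so the cocycle condition holds exactly.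
  have hcocycle (i j : Fin d) :
      A i ^ p ^ k * (A j + B j) ^ p ^ k - A j ^ p ^ k * (A i + B i) ^ p ^ k = 0 := by
    rw [← mul_pow, ← mul_pow, ← sub_pow_expChar_pow]
    refine hk _ (hab ?_)
    rw [show A i * (A j + B j) - A j * (A i + B i) = A i * B j - A j * B i by ring]
    exact ⟨sub_mem (mul_mem_right _ _ (hA i)) (mul_mem_right _ _ (hA j)),
      sub_mem (mul_mem_left _ _ (hB j)) (mul_mem_left _ _ (hB i))⟩
  obtain ⟨e, r, hr⟩ := hF d (fun i => (A i + B i) ^ p ^ k) (fun i => A i ^ p ^ k)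
    (by rwa [radical_span_range_pow _ (pow_ne_zero _ hp.ne_zero)])
    (fun i j => ⟨0, by simpa using hcocycle i j⟩)
  refine ⟨r, fun i => ?_⟩
  obtain ⟨t, ht⟩ := hr i
  simp only [← pow_mul, ← pow_add] at ht
  have hfrob := add_pow_expChar_pow (A i) (B i) p (k + e)
  have heq : (A i + B i) ^ (p ^ k * t) * ((1 - r) * A i ^ p ^ (k + e)) =
      (A i + B i) ^ (p ^ k * t) * (r * B i ^ p ^ (k + e)) := by
    linear_combination ht + r * (A i + B i) ^ (p ^ k * t) * hfrob
  have hmem : (A i + B i) ^ (p ^ k * t) * ((1 - r) * A i ^ p ^ (k + e)) ∈ a ⊓ b := by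
    refine ⟨mul_mem_left _ _ (mul_mem_left _ _ (pow_mem_of_mem _ (hA i) _ (pow_pos hp.pos _))), ?_⟩
    rw [heq]
    exact mul_mem_left _ _ (mul_mem_left _ _ (pow_mem_of_mem _ (hB i) _ (pow_pos hp.pos _)))
  exact ⟨_, _, hab hmem, heq ▸ hab hmem⟩

theorem radical_eq_maximalIdeal_or_of_inf_le_nilradical (hF : IsFTorsionLocalCohomologyOne R p)
    {a b : Ideal R} (hab : a ⊓ b ≤ nilradical R) (hm : (a ⊔ b).radical = maximalIdeal R) :
    a.radical = maximalIdeal R ∨ b.radical = maximalIdeal R := by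
  obtain ⟨d, x, hx : span (range x) = a ⊔ b⟩ :=
    Submodule.fg_iff_exists_fin_generating_family.mp (IsNoetherian.noetherian (a ⊔ b))
  have hxab (i : Fin d) : x i ∈ a ⊔ b := hx ▸ subset_span (mem_range_self i)
  choose A hA B hB hAB using fun i => Submodule.mem_sup.mp (hxab i)
  obtain rfl : x = fun i => A i + B i := funext fun i => (hAB i).symm
  have hABnil : ∀ i, IsNilpotent (A i * B i) :=
    fun i => hab ⟨mul_mem_right _ _ (hA i), mul_mem_left _ _ (hB i)⟩
  obtain ⟨r, hr⟩ := hF.exists_nilpotent_relation hab hA hB (by rwa [hx])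
  rcases isUnit_or_isUnit_one_sub_self r with hu | hu
  · refine .inl (((radical_mono le_sup_left).trans hm.le).antisymm ?_)
    rw [← hm, ← hx, radical_le_radical_iff, span_le]
    rintro _ ⟨i, rfl⟩
    obtain ⟨n, m, -, h⟩ := hr i
    have := add_mem_radical_of_isNilpotent_add_pow_mul (hA i) (mul_comm (A i) (B i) ▸ hABnil i) hu
      (add_comm (A i) (B i) ▸ h)
    rwa [add_comm] at this
  · refine .inr (((radical_mono le_sup_right).trans hm.le).antisymm ?_)
    rw [← hm, ← hx, radical_le_radical_iff, span_le]
    rintro _ ⟨i, rfl⟩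
    obtain ⟨n, m, h, -⟩ := hr i
    exact add_mem_radical_of_isNilpotent_add_pow_mul (hB i) (hABnil i) hu h

end IsFTorsionLocalCohomologyOne

theorem PrimeSpectrum.exists_ideal_of_isClosed_subtype {R : Type*} [CommSemiring R]
    {S : Set (PrimeSpectrum R)} {s : Set S} (hs : IsClosed s) :
    ∃ I : Ideal R, ∀ q : S, q ∈ s ↔ I ≤ q.1.asIdeal := by
  obtain ⟨Z, hZ, rfl⟩ := isClosed_induced_iff.mp hs
  obtain ⟨I, rfl⟩ := (isClosed_iff_zeroLocus_ideal Z).mp hZ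
  exact ⟨I, fun q => (mem_zeroLocus _ _).trans SetLike.coe_subset_coe⟩

section LocalRing

variable {R : Type*} [CommRing R] [IsLocalRing R]

theorem Ideal.radical_eq_maximalIdeal_iff {I : Ideal R} :
    I.radical = maximalIdeal R ↔ I ≠ ⊤ ∧ ∀ P : Ideal R, P.IsPrime → I ≤ P → P = maximalIdeal R := by
  refine ⟨fun h => ⟨?_, fun P hP hIP => ?_⟩, fun ⟨hI, h⟩ => ?_⟩
  · rintro rfl
    exact (maximalIdeal.isMaximal R).ne_top (h ▸ radical_top R)
  · exact ((maximalIdeal.isMaximal R).eq_of_le hP.ne_top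
      (h ▸ (radical_mono hIP).trans hP.radical.le)).symm
  · rw [radical_eq_sInf]
    exact le_antisymm (sInf_le ⟨le_maximalIdeal hI, (maximalIdeal.isMaximal R).isPrime⟩)
      (le_sInf fun P ⟨hIP, hP⟩ => (h P hP hIP).ge)

theorem exists_asIdeal_ne_maximalIdeal_of_ringKrullDim_pos (h : 0 < ringKrullDim R) :
    ∃ q : PrimeSpectrum R, q.asIdeal ≠ maximalIdeal R := by
  by_contra! hq
  have : Subsingleton (PrimeSpectrum R) :=
    ⟨fun q q' => PrimeSpectrum.ext ((hq q).trans (hq q').symm)⟩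
  exact h.not_ge Order.krullDim_nonpos_of_subsingleton

theorem connectedSpace_punctured_of_radical_eq_maximalIdeal_or
    (hne : ∃ q : PrimeSpectrum R, q.asIdeal ≠ maximalIdeal R)
    (h : ∀ a b : Ideal R, a ⊓ b ≤ nilradical R → (a ⊔ b).radical = maximalIdeal R →
      a.radical = maximalIdeal R ∨ b.radical = maximalIdeal R) :
    ConnectedSpace {q : PrimeSpectrum R // q.asIdeal ≠ maximalIdeal R} := by
  obtain ⟨q, hq⟩ := hne
  have : Nonempty {q : PrimeSpectrum R // q.asIdeal ≠ maximalIdeal R} := ⟨⟨q, hq⟩⟩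
  suffices PreconnectedSpace {q : PrimeSpectrum R // q.asIdeal ≠ maximalIdeal R} from
    ⟨inferInstance⟩
  refine preconnectedSpace_iff_clopen.mpr fun s hs => ?_
  obtain ⟨I, hI⟩ := PrimeSpectrum.exists_ideal_of_isClosed_subtype hs.isClosed
  obtain ⟨J, hJ⟩ := PrimeSpectrum.exists_ideal_of_isClosed_subtype hs.compl.isClosed
  by_contra! hs'
  obtain ⟨q₁, hq₁⟩ := hs'.1
  obtain ⟨q₂, hq₂⟩ := ne_univ_iff_exists_notMem s |>.mp hs'.2
  have hIm : I ≤ maximalIdeal R := ((hI q₁).mp hq₁).trans (le_maximalIdeal q₁.1.isPrime.ne_top)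
  have hJm : J ≤ maximalIdeal R := ((hJ q₂).mp hq₂).trans (le_maximalIdeal q₂.1.isPrime.ne_top)
  have hnil : I ⊓ J ≤ nilradical R := by
    rw [nilradical_eq_sInf]
    refine le_sInf fun P (hP : P.IsPrime) => ?_
    by_cases hPm : P = maximalIdeal R
    · exact hPm ▸ inf_le_left.trans hIm
    by_cases hPs : (⟨⟨P, hP⟩, hPm⟩ : {q : PrimeSpectrum R // q.asIdeal ≠ maximalIdeal R}) ∈ s
    · exact inf_le_left.trans ((hI _).mp hPs)
    · exact inf_le_right.trans ((hJ _).mp hPs)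
  have hsup : (I ⊔ J).radical = maximalIdeal R := by
    refine radical_eq_maximalIdeal_iff.mpr
      ⟨ne_top_of_le_ne_top (maximalIdeal.isMaximal R).ne_top (sup_le hIm hJm), fun P hP hle => ?_⟩
    by_contra hPm
    exact (hJ ⟨⟨P, hP⟩, hPm⟩).mpr (le_sup_right.trans hle) ((hI _).mpr (le_sup_left.trans hle))
  rcases h I J hnil hsup with hrad | hrad
  · exact q₁.2 ((radical_eq_maximalIdeal_iff.mp hrad).2 _ q₁.1.isPrime ((hI q₁).mp hq₁))
  · exact q₂.2 ((radical_eq_maximalIdeal_iff.mp hrad).2 _ q₂.1.isPrime ((hJ q₂).mp hq₂))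

end LocalRing

/-- Let `(R, m)` be a Noetherian local ring of positive dimension containing a
field of characteristic `p > 0` such that `H¹_m(R)` is `F`-torsion.  (In Čech
terms: for every family of generators `x` of an `m`-primary ideal and every Čech
1-cocycle `(y i / x i)`, some Frobenius power of the corresponding class of
`H¹_m(R)` is zero, i.e. there are `e` and `r ∈ R` with `(y i / x i)^(pᵉ) = r` in
`R_{x i}` for all `i`.)  If `a`, `b` are ideals of `R` with `a ∩ b = 0` and
`a + b` being `m`-primary, then `a` or `b` is `m`-primary.  Consequently, the
punctured spectrum `Spec R \ {m}` is connected. -/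
theorem stmt_16 (R : Type*) [CommRing R] [IsNoetherianRing R] [IsLocalRing R]
    (p : ℕ) [Fact p.Prime] [CharP R p] (hdim : 0 < ringKrullDim R)
    (hFtor : ∀ (d : ℕ) (x y : Fin d → R),
      (Ideal.span (Set.range x)).radical = IsLocalRing.maximalIdeal R →
      (∀ i j, ∃ t : ℕ, (x i * x j) ^ t * (y i * x j - y j * x i) = 0) →
      ∃ (e : ℕ) (r : R), ∀ i, ∃ t : ℕ,
        x i ^ t * (y i ^ p ^ e - r * x i ^ p ^ e) = 0) :
    (∀ a b : Ideal R, a ⊓ b = ⊥ →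
        (a ⊔ b).radical = IsLocalRing.maximalIdeal R →
        a.radical = IsLocalRing.maximalIdeal R ∨
          b.radical = IsLocalRing.maximalIdeal R) ∧
      ConnectedSpace {q : PrimeSpectrum R //
        q.asIdeal ≠ IsLocalRing.maximalIdeal R} := by
  have hF : IsFTorsionLocalCohomologyOne R p := hFtor
  refine ⟨fun a b hab => hF.radical_eq_maximalIdeal_or_of_inf_le_nilradical (hab ▸ bot_le), ?_⟩
  exact connectedSpace_punctured_of_radical_eq_maximalIdeal_or
    (exists_asIdeal_ne_maximalIdeal_of_ringKrullDim_pos hdim)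
    fun a b => hF.radical_eq_maximalIdeal_or_of_inf_le_nilradical
end

section
/- Let (R,m) be a complete Noetherian local domain of dimension 1 with algebraically closed coefficient field K of characteristic p > 0. If η ∈ H^1_m(R) satisfies F(η) = η, then η = 0. Concretely: if y ∈ R, x ∈ m nonzero, and there is r ∈ R with (y/x)^p − (y/x) − r = 0 in R_x, then y/x ∈ R. -/
/-!
Write `t = y/x`, so that `t ^ p - t = r` in `R_x`. Since `X ^ p - X - r` is separable modulo `m`
(its derivative is `-1`) and the residue field is algebraically closed, Hensel's lemma in the
complete ring `R` gives `a ∈ R` with `a ^ p - a = r`. By additivity of Frobenius, `u = t - a`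
satisfies `u ^ p = u`; in a domain of characteristic `p` this forces `u ∈ 𝔽_p`, so `t = a + u ∈ R`.
-/

open Polynomial IsLocalRing

theorem Polynomial.monic_X_pow_sub_X_sub_C {R : Type*} [CommRing R] {p : ℕ} (hp : 1 < p)
    (r : R) : (X ^ p - X - C r : R[X]).Monic := by
  rw [sub_sub]
  refine monic_X_pow_sub ((degree_add_le _ _).trans_lt ?_)
  rw [max_lt_iff]
  exact ⟨degree_X_le.trans_lt (by exact_mod_cast hp),
    degree_C_le.trans_lt (by exact_mod_cast hp.le.trans_lt' zero_lt_one)⟩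

theorem Polynomial.natDegree_X_pow_sub_X_sub_C {R : Type*} [CommRing R] [Nontrivial R] {p : ℕ}
    (hp : 1 < p) (r : R) : (X ^ p - X - C r : R[X]).natDegree = p := by
  rw [sub_sub, natDegree_sub_eq_left_of_natDegree_lt] <;> simp [hp]

theorem Polynomial.derivative_X_pow_sub_X_sub_C {R : Type*} [CommRing R] (p : ℕ) [CharP R p]
    (r : R) : derivative (X ^ p - X - C r : R[X]) = -1 := by
  simp [derivative_X_pow]

theorem IsAlgClosed.exists_pow_sub_self_eq {k : Type*} [Field k] [IsAlgClosed k] {p : ℕ}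
    (hp : 1 < p) (c : k) : ∃ b : k, b ^ p - b = c := by
  obtain ⟨b, hb⟩ := IsAlgClosed.exists_root (X ^ p - X - C c) <| by
    rw [degree_eq_natDegree (monic_X_pow_sub_X_sub_C hp c).ne_zero,
      natDegree_X_pow_sub_X_sub_C hp c]
    exact_mod_cast (zero_lt_one.trans hp).ne'
  exact ⟨b, by simpa [sub_eq_zero] using hb⟩

theorem HenselianRing.exists_pow_sub_self_eq {R : Type*} [CommRing R] [IsLocalRing R]
    [HenselianRing R (maximalIdeal R)] (p : ℕ) [Fact p.Prime] [CharP R p]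
    (hres : ∀ c : ResidueField R, ∃ b, b ^ p - b = c) (r : R) : ∃ a : R, a ^ p - a = r := by
  set f : R[X] := X ^ p - X - C r
  obtain ⟨b, hb⟩ := hres (residue R r)
  obtain ⟨a₀, rfl⟩ := residue_surjective b
  have ha₀ : f.eval a₀ ∈ maximalIdeal R := by
    rw [← residue_eq_zero_iff]
    simp [f, hb]
  have hunit : IsUnit (Ideal.Quotient.mk (maximalIdeal R) (f.derivative.eval a₀)) := by
    simp [f, derivative_X_pow_sub_X_sub_C p r]
  obtain ⟨a, ha, -⟩ := HenselianRing.is_henselian f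
    (monic_X_pow_sub_X_sub_C (Fact.out : p.Prime).one_lt r) a₀ ha₀ hunit
  exact ⟨a, by simpa [f, sub_eq_zero] using ha⟩

theorem exists_natCast_eq_of_pow_eq_self {S : Type*} [CommRing S] [IsDomain S]
    (p : ℕ) [Fact p.Prime] [CharP S p] {u : S} (hu : u ^ p = u) : ∃ n : ℕ, (n : S) = u := by
  let F := FractionRing S
  have hinj : Function.Injective (algebraMap S F) := IsFractionRing.injective S F
  have : CharP F p := charP_of_injective_algebraMap hinj p
  have hmem : algebraMap S F u ∈ (⊥ : Subfield F) :=
    (Subfield.mem_bot_iff_pow_eq_self F p).2 (by rw [← map_pow, hu])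
  rw [← ZMod.fieldRange_castHom_eq_bot p] at hmem
  obtain ⟨b, hb⟩ := hmem
  exact ⟨b.val, hinj (by rw [map_natCast, ← hb, ZMod.castHom_apply, ZMod.natCast_val])⟩

theorem HenselianRing.exists_algebraMap_eq_of_pow_sub_self_eq {R S : Type*} [CommRing R]
    [IsLocalRing R] [HenselianRing R (maximalIdeal R)] [CommRing S] [IsDomain S] [Algebra R S]
    (p : ℕ) [Fact p.Prime] [CharP R p] [CharP S p]
    (hres : ∀ c : ResidueField R, ∃ b, b ^ p - b = c)
    {t : S} {r : R} (h : t ^ p - t = algebraMap R S r) : ∃ s : R, algebraMap R S s = t := by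
  obtain ⟨a, ha⟩ := exists_pow_sub_self_eq p hres r
  have ha' : algebraMap R S a ^ p - algebraMap R S a = algebraMap R S r := by
    rw [← ha, map_sub, map_pow]
  have hu : (t - algebraMap R S a) ^ p = t - algebraMap R S a := by
    rw [sub_pow_char]
    linear_combination h - ha'
  obtain ⟨n, hn⟩ := exists_natCast_eq_of_pow_eq_self p hu
  exact ⟨a + n, by rw [map_add, map_natCast, hn, add_sub_cancel]⟩

theorem stmt_17_general (R : Type*) [CommRing R] [IsLocalRing R]
    [IsDomain R] [IsAdicComplete (IsLocalRing.maximalIdeal R) R]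
    (p : ℕ) [Fact p.Prime] [CharP R p]
    (K : Type*) [Field K] [IsAlgClosed K] [Algebra K R]
    (hcoeff : Function.Bijective ((IsLocalRing.residue R).comp (algebraMap K R)))
    (y x : R) (hx0 : x ≠ 0) (r : R)
    (heq : (IsLocalization.mk' (Localization.Away x) y
          (⟨x, Submonoid.mem_powers x⟩ : Submonoid.powers x)) ^ p -
        IsLocalization.mk' (Localization.Away x) y
          (⟨x, Submonoid.mem_powers x⟩ : Submonoid.powers x) -
        algebraMap R (Localization.Away x) r = 0) :
    ∃ s : R, algebraMap R (Localization.Away x) s =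
      IsLocalization.mk' (Localization.Away x) y
        (⟨x, Submonoid.mem_powers x⟩ : Submonoid.powers x) := by
  have hres (c : ResidueField R) : ∃ b, b ^ p - b = c := by
    let e := RingEquiv.ofBijective _ hcoeff
    obtain ⟨k, hk⟩ := IsAlgClosed.exists_pow_sub_self_eq (Fact.out : p.Prime).one_lt (e.symm c)
    exact ⟨e k, by rw [← map_pow, ← map_sub, hk, e.apply_symm_apply]⟩
  have : IsDomain (Localization.Away x) := IsLocalization.Away.isDomain _ hx0
  have : CharP (Localization.Away x) p := charP_of_injective_algebraMap
    (IsLocalization.injective _ (powers_le_nonZeroDivisors_of_noZeroDivisors hx0)) p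
  exact HenselianRing.exists_algebraMap_eq_of_pow_sub_self_eq p hres (sub_eq_zero.mp heq)

/-- Let `(R, m)` be a complete Noetherian local domain of dimension `1` with an
algebraically closed coefficient field `K` of characteristic `p > 0`.  If
`η ∈ H¹_m(R)` satisfies `F η = η` then `η = 0`.  Concretely (via
`H¹_m(R) ≅ R_x / R`): if `y ∈ R`, `x ∈ m` is nonzero, and there is `r ∈ R` with
`(y/x)^p − (y/x) − r = 0` in `R_x`, then `y/x` lies in (the image of) `R`. -/
theorem stmt_17 (R : Type*) [CommRing R] [IsNoetherianRing R] [IsLocalRing R]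
    [IsDomain R] [IsAdicComplete (IsLocalRing.maximalIdeal R) R]
    (hdim : ringKrullDim R = 1)
    (p : ℕ) [Fact p.Prime] [CharP R p]
    (K : Type*) [Field K] [IsAlgClosed K] [Algebra K R]
    (hcoeff : Function.Bijective ((IsLocalRing.residue R).comp (algebraMap K R)))
    (y x : R) (hx : x ∈ IsLocalRing.maximalIdeal R) (hx0 : x ≠ 0) (r : R)
    (heq : (IsLocalization.mk' (Localization.Away x) y
          (⟨x, Submonoid.mem_powers x⟩ : Submonoid.powers x)) ^ p -
        IsLocalization.mk' (Localization.Away x) y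
          (⟨x, Submonoid.mem_powers x⟩ : Submonoid.powers x) -
        algebraMap R (Localization.Away x) r = 0) :
    ∃ s : R, algebraMap R (Localization.Away x) s =
      IsLocalization.mk' (Localization.Away x) y
        (⟨x, Submonoid.mem_powers x⟩ : Submonoid.powers x) :=
  stmt_17_general R p K hcoeff y x hx0 r heq
end
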